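/- For every integer h ≥ 2, the persistent reversible pebbling number of the complete binary tree of height h is at least one more than that of the complete binary tree of height h − 1: rev(Bt_h) ≥ rev(Bt_{h−1}) + 1. -/

import Mathlib

/-- A system for pebbling: a finite directed tree given by a root and a parent
function (edges are directed from each non-root vertex to its parent, i.e.
toward the root). -/
structure PebSys (V : Type) where
  root : V
  parent : V → V

/-- `T` is a genuine rooted directed tree: the root is a fixed point of the
parent map and every vertex reaches the root by iterating the parent map. -/
def IsRDTree {V : Type} [Fintype V] (T : PebSys V) : Prop :=
  T.parent T.root = T.root ∧ ∀ v : V, ∃ k : ℕ, T.parent^[k] v = T.root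

/-- One legal move of the reversible pebble game, from configuration `P` to
configuration `Q`: exactly one vertex `v` is pebbled or unpebbled, and all
in-neighbours of `v` (vertices `u ≠ v` with `parent u = v`) carry pebbles
in `P`. -/
def PebStep {V : Type} [DecidableEq V] (T : PebSys V) (P Q : Finset V) : Prop :=
  ∃ v : V, ((v ∉ P ∧ Q = insert v P) ∨ (v ∉ Q ∧ P = insert v Q)) ∧
    ∀ u : V, u ≠ v → T.parent u = v → u ∈ P

/-- A persistent reversible pebbling: starts with no pebbles, ends with a
pebble exactly on the root, consecutive configurations are legal moves. -/
def IsPebbling {V : Type} [DecidableEq V] (T : PebSys V) (L : List (Finset V)) : Prop :=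
  L.head? = some ∅ ∧ L.getLast? = some {T.root} ∧ L.Chain' (PebStep T)

/-- A visiting reversible pebbling: starts and ends with no pebbles, and the
root carries a pebble at some point. -/
def IsVisPebbling {V : Type} [DecidableEq V] (T : PebSys V) (L : List (Finset V)) : Prop :=
  L.head? = some ∅ ∧ L.getLast? = some ∅ ∧ (∃ P ∈ L, T.root ∈ P) ∧ L.Chain' (PebStep T)

/-- The space of a pebbling: the maximum number of pebbles in any configuration. -/
def pebSpace {V : Type} (L : List (Finset V)) : ℕ := (L.map Finset.card).foldr max 0

/-- The persistent reversible pebbling number `rev`. -/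
noncomputable def revNum {V : Type} [DecidableEq V] (T : PebSys V) : ℕ :=
  sInf {k | ∃ L : List (Finset V), IsPebbling T L ∧ pebSpace L ≤ k}

/-- The visiting reversible pebbling number `vrev`. -/
noncomputable def vrevNum {V : Type} [DecidableEq V] (T : PebSys V) : ℕ :=
  sInf {k | ∃ L : List (Finset V), IsVisPebbling T L ∧ pebSpace L ≤ k}

/-- The complete binary tree of height `h` (every root-to-leaf path has `h`
nodes), on the `2 ^ h - 1` vertices `0, …, 2 ^ h - 2` in heap order: the root
is `0` and the parent of vertex `i > 0` is `(i - 1) / 2`; all edges are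
directed toward the root. -/
def BtSys (h : ℕ) (hpos : 0 < 2 ^ h - 1) : PebSys (Fin (2 ^ h - 1)) where
  root := ⟨0, hpos⟩
  parent := fun i =>
    ⟨(i.val - 1) / 2, lt_of_le_of_lt (le_trans (Nat.div_le_self _ _) (Nat.sub_le _ _)) i.isLt⟩


/-!
Follow an optimal pebbling of `Bt_h`, of space `s`, from the last time its root is placed. At
that moment both children of the root are pebbled, and from then on the root keeps its pebble,
so the two subtrees `Bt_(h-1)` together carry at most `s - 1` pebbles. Let `M` be the first later
time at which one subtree, say the left one, is empty. Before `M` both subtrees carry pebbles,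
so the left one carries at most `s - 2`. Running its restriction backwards from `M` pebbles
`Bt_(h-1)` from nothing up to a configuration containing its root, and running it forwards
again with an extra pebble on that root ends with the root alone, all within `s - 1` pebbles.
-/

open Relation

theorem card_le_pebSpace {V : Type} {P : Finset V} {L : List (Finset V)} (hP : P ∈ L) :
    P.card ≤ pebSpace L :=
  List.le_max_of_le' 0 (List.mem_map_of_mem hP) le_rfl

theorem pebSpace_le {V : Type} {b : ℕ} {L : List (Finset V)} (h : ∀ P ∈ L, P.card ≤ b) :
    pebSpace L ≤ b :=
  List.max_le_of_forall_le _ _ (by simpa using h)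

section Steps

variable {V : Type} [DecidableEq V] {T : PebSys V}

theorem PebStep.symm {P Q : Finset V} (h : PebStep T P Q) : PebStep T Q P := by
  obtain ⟨v, hmv, hchild⟩ := h
  refine ⟨v, hmv.symm, fun u hu hpar => ?_⟩
  rcases hmv with ⟨-, rfl⟩ | ⟨-, rfl⟩
  · exact Finset.mem_insert_of_mem (hchild u hu hpar)
  · exact (Finset.mem_insert.1 (hchild u hu hpar)).resolve_left hu

instance : Std.Symm (PebStep T) :=
  ⟨fun _ _ => PebStep.symm⟩

theorem PebStep.eq_insert_of_notMem_of_mem {P Q : Finset V} {v : V} (h : PebStep T P Q)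
    (hP : v ∉ P) (hQ : v ∈ Q) : Q = insert v P ∧ ∀ u, u ≠ v → T.parent u = v → u ∈ P := by
  obtain ⟨w, hmw, hchild⟩ := h
  rcases hmw with ⟨-, rfl⟩ | ⟨-, rfl⟩
  · obtain rfl : v = w := (Finset.mem_insert.1 hQ).resolve_right hP
    exact ⟨rfl, hchild⟩
  · exact absurd (Finset.mem_insert_of_mem hQ) hP

theorem PebStep.reflGen_insert (w : V) {P Q : Finset V} (h : ReflGen (PebStep T) P Q) :
    ReflGen (PebStep T) (insert w P) (insert w Q) := by
  rcases h with _ | ⟨v, hmv, hchild⟩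
  · exact .refl
  by_cases hvw : v = w
  · subst hvw
    rcases hmv with ⟨-, rfl⟩ | ⟨-, rfl⟩ <;> simp only [Finset.insert_idem] <;> exact .refl
  · refine .single ⟨v, ?_, fun u hu hpar => Finset.mem_insert_of_mem (hchild u hu hpar)⟩
    rcases hmv with ⟨hv, rfl⟩ | ⟨hv, rfl⟩
    · exact Or.inl ⟨by simp [hvw, hv], Finset.insert_comm _ _ _⟩
    · exact Or.inr ⟨by simp [hvw, hv], Finset.insert_comm _ _ _⟩

def SpaceStep (T : PebSys V) (b : ℕ) (P Q : Finset V) : Prop :=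
  PebStep T P Q ∧ P.card ≤ b ∧ Q.card ≤ b

instance (b : ℕ) : Std.Symm (SpaceStep T b) :=
  ⟨fun _ _ ⟨h, hP, hQ⟩ => ⟨h.symm, hQ, hP⟩⟩

theorem SpaceStep.mono {b b' : ℕ} (hb : b ≤ b') : SpaceStep T b ≤ SpaceStep T b' :=
  fun _ _ ⟨h, hP, hQ⟩ => ⟨h, hP.trans hb, hQ.trans hb⟩

theorem reflGen_spaceStep {b : ℕ} {P Q : Finset V} (h : ReflGen (PebStep T) P Q)
    (hP : P.card ≤ b) (hQ : Q.card ≤ b) : ReflGen (SpaceStep T b) P Q := by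
  rcases h with _ | hPQ
  exacts [.refl, .single ⟨hPQ, hP, hQ⟩]

theorem IsPebbling.reflTransGen {L : List (Finset V)} (hL : IsPebbling T L) :
    ReflTransGen (SpaceStep T (pebSpace L)) ∅ {T.root} := by
  obtain ⟨hhead, hlast, hchain⟩ := hL
  obtain ⟨l, rfl⟩ : ∃ l, L = ∅ :: l := by
    cases L with
    | nil => simp at hhead
    | cons P l => exact ⟨l, by simpa using hhead⟩
  refine List.relationReflTransGen_of_exists_isChain_cons l ?_ ?_
  · exact List.IsChain.imp_of_mem_imp
      (fun P Q hP hQ hPQ => ⟨hPQ, card_le_pebSpace hP, card_le_pebSpace hQ⟩) hchain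
  · simpa [List.getLast?_eq_some_getLast] using hlast

theorem exists_isPebbling_of_reflTransGen {b : ℕ}
    (h : ReflTransGen (SpaceStep T b) ∅ {T.root}) : ∃ L, IsPebbling T L ∧ pebSpace L ≤ b := by
  obtain ⟨l, hchain, hlast⟩ := List.exists_isChain_cons_of_relationReflTransGen h
  refine ⟨∅ :: l, ⟨rfl, ?_, hchain.imp fun _ _ h => h.1⟩, pebSpace_le ?_⟩
  · simpa [List.getLast?_eq_some_getLast] using hlast
  · exact List.IsChain.induction (·.card ≤ b) _ hchain (fun _ _ h _ => h.2.2) (fun _ => by simp)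

theorem revNum_le_of_reflTransGen {b : ℕ} (h : ReflTransGen (SpaceStep T b) ∅ {T.root}) :
    revNum T ≤ b :=
  Nat.sInf_le (exists_isPebbling_of_reflTransGen h)

theorem reflTransGen_revNum (hT : ∃ L, IsPebbling T L) :
    ReflTransGen (SpaceStep T (revNum T)) ∅ {T.root} := by
  obtain ⟨L, hT⟩ := hT
  obtain ⟨L', hL', hspace⟩ := Nat.sInf_mem (s := {k | ∃ L, IsPebbling T L ∧ pebSpace L ≤ k})
    ⟨_, L, hT, le_rfl⟩
  exact ReflTransGen.mono (SpaceStep.mono hspace) _ _ hL'.reflTransGen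

/-- For `T.root ∈ X`: the two halves of a pebbling of `T` within space `b` passing through `X`. -/
def Clearable (T : PebSys V) (b : ℕ) (X : Finset V) : Prop :=
  (insert T.root X).card ≤ b ∧ ReflTransGen (SpaceStep T b) X ∅ ∧
    ReflTransGen (SpaceStep T b) (insert T.root X) {T.root}

theorem clearable_empty {b : ℕ} (hb : 1 ≤ b) : Clearable T b ∅ :=
  ⟨by simpa using hb, .refl, .refl⟩

theorem Clearable.of_reflGen {b : ℕ} {X Y : Finset V} (h : Clearable T b Y)
    (hXY : ReflGen (PebStep T) X Y) (hX : (insert T.root X).card ≤ b) (hY : Y.card ≤ b) :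
    Clearable T b X := by
  obtain ⟨hcardY, hclear, hclear_root⟩ := h
  refine ⟨hX, ?_, ?_⟩
  · exact (reflGen_spaceStep hXY ((Finset.card_le_card (Finset.subset_insert _ _)).trans hX)
      hY).to_reflTransGen.trans hclear
  · exact (reflGen_spaceStep (PebStep.reflGen_insert _ hXY) hX hcardY).to_reflTransGen.trans
      hclear_root

theorem Clearable.reflTransGen {b : ℕ} {X : Finset V} (h : Clearable T b X)
    (hX : T.root ∈ X) : ReflTransGen (SpaceStep T b) ∅ {T.root} := by
  obtain ⟨-, hclear, hclear_root⟩ := h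
  rw [Finset.insert_eq_self.2 hX] at hclear_root
  exact (symm hclear).trans hclear_root

end Steps

section Existence

variable {V : Type} [LinearOrder V] {T : PebSys V}

/-- Pebbling the vertices of a child-closed set `S` from the largest down places each vertex
after its children, which are larger. -/
theorem reflTransGen_pebStep_union (hpar : ∀ u, T.parent u ≤ u) (K : Finset V) {S : Finset V}
    (hS : ∀ u, T.parent u ∈ S → u ∈ S) : ReflTransGen (PebStep T) K (K ∪ S) := by
  induction S using Finset.induction_on_min with
  | empty => rw [Finset.union_empty]
  | insert a S ha ih =>
    have hchild : ∀ u, u ≠ a → T.parent u = a → u ∈ S := fun u hu hpar' =>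
      (Finset.mem_insert.1 (hS u (hpar' ▸ Finset.mem_insert_self _ _))).resolve_left hu
    refine (ih fun u hu => ?_).trans ?_
    · refine (Finset.mem_insert.1 (hS u (Finset.mem_insert_of_mem hu))).resolve_left ?_
      rintro rfl
      exact (hpar u).not_gt (ha _ hu)
    · rw [Finset.union_insert]
      by_cases haKS : a ∈ K ∪ S
      · rw [Finset.insert_eq_self.2 haKS]
      · exact .single ⟨a, Or.inl ⟨haKS, rfl⟩,
          fun u hu hpar' => Finset.mem_union_right _ (hchild u hu hpar')⟩

theorem exists_isPebbling_of_parent_le [Fintype V] (hpar : ∀ u, T.parent u ≤ u) :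
    ∃ L, IsPebbling T L := by
  have hup : ReflTransGen (PebStep T) ∅ Finset.univ := by
    simpa using reflTransGen_pebStep_union hpar ∅ (S := Finset.univ) (by simp)
  have hdown : ReflTransGen (PebStep T) {T.root} Finset.univ := by
    simpa using reflTransGen_pebStep_union hpar {T.root} (S := Finset.univ) (by simp)
  have h : ReflTransGen (PebStep T) ∅ {T.root} := hup.trans (symm hdown)
  exact (exists_isPebbling_of_reflTransGen (b := Fintype.card V) <| ReflTransGen.mono
    (fun P Q hPQ => ⟨hPQ, P.card_le_univ, Q.card_le_univ⟩) _ _ h).imp fun _ => And.left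

end Existence

theorem Relation.ReflTransGen.exists_last_entry {α : Type*} {r : α → α → Prop} {p : α → Prop}
    {a b : α} (h : ReflTransGen r a b) (ha : ¬ p a) (hb : p b) :
    ∃ x y, r x y ∧ ¬ p x ∧ p y ∧ ReflTransGen (fun x y => r x y ∧ p x ∧ p y) y b := by
  suffices key : ∃ y, p y ∧ ReflTransGen (fun x y => r x y ∧ p x ∧ p y) y b ∧
      (y = a ∨ ∃ x, r x y ∧ ¬ p x) by
    obtain ⟨y, hy, hyb, rfl | ⟨x, hxy, hx⟩⟩ := key
    exacts [absurd hy ha, ⟨x, y, hxy, hx, hy, hyb⟩]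
  clear ha
  induction h using ReflTransGen.head_induction_on with
  | refl => exact ⟨b, hb, .refl, Or.inl rfl⟩
  | @head a c hac _ ih =>
    obtain ⟨y, hy, hyb, rfl | hentry⟩ := ih
    · by_cases hpa : p a
      · exact ⟨a, hpa, .head ⟨hac, hpa, hy⟩ hyb, Or.inl rfl⟩
      · exact ⟨y, hy, hyb, Or.inr ⟨a, hac, hpa⟩⟩
    · exact ⟨y, hy, hyb, Or.inr hentry⟩

section Branches

variable {V V' : Type}

noncomputable def restrict (ι : V' ↪ V) (A : Finset V) : Finset V' :=
  A.preimage ι ι.injective.injOn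

@[simp] theorem mem_restrict {ι : V' ↪ V} {A : Finset V} {x : V'} :
    x ∈ restrict ι A ↔ ι x ∈ A :=
  Finset.mem_preimage

variable [DecidableEq V]

theorem card_restrict_add_card_restrict_lt {ι₁ ι₂ : V' ↪ V} (hdisj : ∀ x y, ι₁ x ≠ ι₂ y)
    {A : Finset V} {v : V} (hv : v ∈ A) (hv₁ : ∀ x, ι₁ x ≠ v) (hv₂ : ∀ x, ι₂ x ≠ v) :
    (restrict ι₁ A).card + (restrict ι₂ A).card < A.card := by
  have hsub : (restrict ι₁ A).map ι₁ ∪ (restrict ι₂ A).map ι₂ ⊆ A.erase v := by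
    intro a ha
    simp only [Finset.mem_union, Finset.mem_map, mem_restrict] at ha
    rcases ha with ⟨x, hx, rfl⟩ | ⟨x, hx, rfl⟩
    exacts [Finset.mem_erase.2 ⟨hv₁ x, hx⟩, Finset.mem_erase.2 ⟨hv₂ x, hx⟩]
  have hdisj' : Disjoint ((restrict ι₁ A).map ι₁) ((restrict ι₂ A).map ι₂) := by
    simp only [Finset.disjoint_left, Finset.mem_map]
    rintro _ ⟨x, -, rfl⟩ ⟨y, -, hy⟩
    exact hdisj x y hy.symm
  have := Finset.card_le_card hsub
  rw [Finset.card_union_of_disjoint hdisj', Finset.card_map, Finset.card_map,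
    Finset.card_erase_of_mem hv] at this
  have := Finset.card_pos.2 ⟨v, hv⟩
  omega

variable [DecidableEq V'] {T : PebSys V} {T' : PebSys V'}

theorem reflGen_pebStep_restrict {ι : V' ↪ V}
    (hι : ∀ x y, x ≠ y → T'.parent x = y → T.parent (ι x) = ι y) {A B : Finset V}
    (h : PebStep T A B) : ReflGen (PebStep T') (restrict ι A) (restrict ι B) := by
  obtain ⟨v, hmv, hchild⟩ := h
  by_cases hv : ∃ y, ι y = v
  · obtain ⟨y, rfl⟩ := hv
    refine .single ⟨y, ?_, fun u hu hpar => mem_restrict.2 <|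
      hchild _ (ι.injective.ne hu) (hι u y hu hpar)⟩
    rcases hmv with ⟨hyA, rfl⟩ | ⟨hyB, rfl⟩
    · exact Or.inl ⟨by simpa using hyA, by ext; simp⟩
    · exact Or.inr ⟨by simpa using hyB, by ext; simp⟩
  · push Not at hv
    have hAB : restrict ι A = restrict ι B := by
      ext z
      rcases hmv with ⟨-, rfl⟩ | ⟨-, rfl⟩ <;> simp [hv z]
    exact hAB ▸ .refl

structure IsBranch (T : PebSys V) (T' : PebSys V') (ι : V' ↪ V) : Prop where
  parent_root : T.parent (ι T'.root) = T.root
  ne_root : ∀ x, ι x ≠ T.root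
  parent_eq : ∀ x y, x ≠ y → T'.parent x = y → T.parent (ι x) = ι y

/-- While the root of `T` stays pebbled, some branch keeps a clearable configuration: as long as
both branches carry pebbles, each of them has a pebble to spare for its own root. -/
theorem clearable_restrict_of_reflTransGen {ι₁ ι₂ : V' ↪ V} (h₁ : IsBranch T T' ι₁)
    (h₂ : IsBranch T T' ι₂) (hdisj : ∀ x y, ι₁ x ≠ ι₂ y) {b : ℕ} (hb : 1 ≤ b) {A : Finset V}
    (hA : ReflTransGen (fun A B => SpaceStep T (b + 1) A B ∧ T.root ∈ A ∧ T.root ∈ B) A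
      {T.root}) :
    Clearable T' b (restrict ι₁ A) ∨ Clearable T' b (restrict ι₂ A) := by
  induction hA using ReflTransGen.head_induction_on with
  | refl =>
    have hempty : restrict ι₁ {T.root} = ∅ := by
      ext x
      simpa using h₁.ne_root x
    exact Or.inl (hempty ▸ clearable_empty hb)
  | @head A B hAB _ ih =>
    obtain ⟨⟨hstep, hAb, hBb⟩, hrA, hrB⟩ := hAB
    by_cases hX : restrict ι₁ A = ∅
    · exact Or.inl (hX ▸ clearable_empty hb)
    by_cases hY : restrict ι₂ A = ∅
    · exact Or.inr (hY ▸ clearable_empty hb)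
    have hcardA := card_restrict_add_card_restrict_lt hdisj hrA h₁.ne_root h₂.ne_root
    have hcardB := card_restrict_add_card_restrict_lt hdisj hrB h₁.ne_root h₂.ne_root
    have hX₁ := Finset.card_pos.2 (Finset.nonempty_iff_ne_empty.2 hX)
    have hY₁ := Finset.card_pos.2 (Finset.nonempty_iff_ne_empty.2 hY)
    have hins₁ := Finset.card_insert_le T'.root (restrict ι₁ A)
    have hins₂ := Finset.card_insert_le T'.root (restrict ι₂ A)
    rcases ih with h | h
    · exact Or.inl (h.of_reflGen (reflGen_pebStep_restrict h₁.parent_eq hstep) (by omega)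
        (by omega))
    · exact Or.inr (h.of_reflGen (reflGen_pebStep_restrict h₂.parent_eq hstep) (by omega)
        (by omega))

/-- When an optimal pebbling of `T` last places the root, both branch roots carry pebbles. -/
theorem revNum_add_one_le_of_isBranch {ι₁ ι₂ : V' ↪ V} (h₁ : IsBranch T T' ι₁)
    (h₂ : IsBranch T T' ι₂) (hdisj : ∀ x y, ι₁ x ≠ ι₂ y) (hT : ∃ L, IsPebbling T L) :
    revNum T' + 1 ≤ revNum T := by
  obtain ⟨A, B, ⟨hAB, -, hB⟩, hrA, hrB, hBroot⟩ :=
    (reflTransGen_revNum hT).exists_last_entry (p := (T.root ∈ ·)) (Finset.notMem_empty _)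
      (Finset.mem_singleton_self _)
  obtain ⟨rfl, hchild⟩ := hAB.eq_insert_of_notMem_of_mem hrA hrB
  have hroot₁ : T'.root ∈ restrict ι₁ (insert T.root A) := by
    simpa using Or.inr (hchild _ (h₁.ne_root _) h₁.parent_root)
  have hroot₂ : T'.root ∈ restrict ι₂ (insert T.root A) := by
    simpa using Or.inr (hchild _ (h₂.ne_root _) h₂.parent_root)
  have hcard := card_restrict_add_card_restrict_lt hdisj (Finset.mem_insert_self T.root A)
    h₁.ne_root h₂.ne_root
  have hpos₁ := Finset.card_pos.2 ⟨_, hroot₁⟩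
  have hpos₂ := Finset.card_pos.2 ⟨_, hroot₂⟩
  obtain ⟨b, hb⟩ : ∃ b, revNum T = b + 1 := ⟨revNum T - 1, by omega⟩
  rw [hb] at hBroot ⊢
  rcases clearable_restrict_of_reflTransGen h₁ h₂ hdisj (by omega) hBroot with h | h
  · exact Nat.succ_le_succ (revNum_le_of_reflTransGen (h.reflTransGen hroot₁))
  · exact Nat.succ_le_succ (revNum_le_of_reflTransGen (h.reflTransGen hroot₂))

end Branches

section BinaryTree

/-- In heap order, vertex `w` of depth `l = log₂ (w + 1)` of `Bt_k` corresponds to vertex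
`w + c * 2 ^ l` of `Bt_(k+1)` in the branch below child `c ∈ {1, 2}` of the root. -/
def btBranchIdx (c w : ℕ) : ℕ := w + c * 2 ^ Nat.log 2 (w + 1)

theorem btBranchIdx_strictMono (c : ℕ) : StrictMono (btBranchIdx c) := by
  intro w u hwu
  have : 2 ^ Nat.log 2 (w + 1) ≤ 2 ^ Nat.log 2 (u + 1) :=
    Nat.pow_le_pow_right two_pos (Nat.log_mono_right (by omega))
  have := Nat.mul_le_mul_left c this
  unfold btBranchIdx
  omega

theorem btBranchIdx_parent (c : ℕ) {w : ℕ} (hw : 1 ≤ w) :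
    btBranchIdx c ((w - 1) / 2) = (btBranchIdx c w - 1) / 2 := by
  have hl : 1 ≤ Nat.log 2 (w + 1) := Nat.le_log_of_pow_le one_lt_two (by omega)
  have hlog : Nat.log 2 ((w - 1) / 2 + 1) = Nat.log 2 (w + 1) - 1 := by
    rw [show (w - 1) / 2 + 1 = (w + 1) / 2 by omega, Nat.log_div_base]
  have hpow : c * 2 ^ Nat.log 2 (w + 1) = 2 * (c * 2 ^ (Nat.log 2 (w + 1) - 1)) := by
    rw [mul_left_comm, ← pow_succ', Nat.sub_add_cancel hl]
  unfold btBranchIdx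
  rw [hlog]
  omega

theorem pow_log_succ_le_btBranchIdx {c : ℕ} (hc₀ : 1 ≤ c) (w : ℕ) :
    2 ^ (Nat.log 2 (w + 1) + 1) ≤ btBranchIdx c w + 1 := by
  have := Nat.pow_log_le_self 2 (by omega : w + 1 ≠ 0)
  have := Nat.mul_le_mul_right (2 ^ Nat.log 2 (w + 1)) hc₀
  rw [pow_succ]
  unfold btBranchIdx
  omega

theorem btBranchIdx_lt_pow {c : ℕ} (hc : c ≤ 2) (w : ℕ) :
    btBranchIdx c w + 1 < 2 ^ (Nat.log 2 (w + 1) + 2) := by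
  have hlt := Nat.lt_pow_succ_log_self one_lt_two (w + 1)
  have := Nat.mul_le_mul_right (2 ^ Nat.log 2 (w + 1)) hc
  rw [pow_succ] at hlt
  rw [pow_add]
  unfold btBranchIdx
  omega

theorem log_btBranchIdx {c : ℕ} (hc₀ : 1 ≤ c) (hc : c ≤ 2) (w : ℕ) :
    Nat.log 2 (btBranchIdx c w + 1) = Nat.log 2 (w + 1) + 1 :=
  (Nat.log_eq_iff (Or.inl (Nat.succ_ne_zero _))).2
    ⟨pow_log_succ_le_btBranchIdx hc₀ w, btBranchIdx_lt_pow hc w⟩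

theorem btBranchIdx_one_ne_two (w u : ℕ) : btBranchIdx 1 w ≠ btBranchIdx 2 u := by
  intro h
  have hlog : Nat.log 2 (w + 1) = Nat.log 2 (u + 1) := by
    have := log_btBranchIdx le_rfl one_le_two w
    rw [h, log_btBranchIdx one_le_two le_rfl u] at this
    omega
  have hw := Nat.lt_pow_succ_log_self one_lt_two (w + 1)
  have hu := Nat.pow_log_le_self 2 (by omega : u + 1 ≠ 0)
  rw [pow_succ, hlog] at hw
  unfold btBranchIdx at h
  rw [hlog] at h
  omega

def btBranch (k : ℕ) {c : ℕ} (hc : c ≤ 2) : Fin (2 ^ k - 1) ↪ Fin (2 ^ (k + 1) - 1) where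
  toFun x := ⟨btBranchIdx c x, by
    have hlog : Nat.log 2 (x + 1) < k := Nat.log_lt_of_lt_pow (by omega) (by omega)
    have := btBranchIdx_lt_pow hc x
    have : 2 ^ (Nat.log 2 (x + 1) + 2) ≤ 2 ^ (k + 1) := Nat.pow_le_pow_right two_pos (by omega)
    omega⟩
  inj' _ _ h := Fin.ext ((btBranchIdx_strictMono c).injective (congrArg Fin.val h))

theorem isBranch_btBranch (k : ℕ) {c : ℕ} (hc₀ : 1 ≤ c) (hc : c ≤ 2) (hk : 0 < 2 ^ k - 1)
    (hk' : 0 < 2 ^ (k + 1) - 1) : IsBranch (BtSys (k + 1) hk') (BtSys k hk) (btBranch k hc) where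
  parent_root := Fin.ext <| show (btBranchIdx c 0 - 1) / 2 = 0 by
    simp [btBranchIdx]
    omega
  ne_root x h := by
    have := pow_log_succ_le_btBranchIdx hc₀ x
    have := Nat.one_le_two_pow (n := Nat.log 2 (x + 1) + 1)
    have : btBranchIdx c x = 0 := congrArg Fin.val h
    omega
  parent_eq x y hxy hpar := by
    have hx : 1 ≤ x.val := by
      by_contra hx
      exact hxy (hpar ▸ Fin.ext (show x.val = (x.val - 1) / 2 by omega))
    subst hpar
    exact Fin.ext (btBranchIdx_parent c hx).symm

theorem revNum_btSys_add_one_le (k : ℕ) (hk : 0 < 2 ^ k - 1) (hk' : 0 < 2 ^ (k + 1) - 1) :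
    revNum (BtSys k hk) + 1 ≤ revNum (BtSys (k + 1) hk') :=
  revNum_add_one_le_of_isBranch (isBranch_btBranch k le_rfl one_le_two hk hk')
    (isBranch_btBranch k one_le_two le_rfl hk hk')
    (fun x y h => btBranchIdx_one_ne_two x y (congrArg Fin.val h))
    (exists_isPebbling_of_parent_le fun u => Fin.le_iff_val_le_val.2 (by
      show (u.val - 1) / 2 ≤ u.val
      omega))

end BinaryTree

/-- For every integer `h ≥ 2`,
`rev(Bt_h) ≥ rev(Bt_{h-1}) + 1`. -/
theorem rev_bt_ge_rev_bt_pred_add_one (h : ℕ) (hh : 2 ≤ h) :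
    revNum (BtSys (h - 1)
        (by have : 1 < 2 ^ (h - 1) := Nat.one_lt_two_pow_iff.mpr (by omega); omega)) + 1 ≤
      revNum (BtSys h
        (by have : 1 < 2 ^ h := Nat.one_lt_two_pow_iff.mpr (by omega); omega)) := by
  obtain ⟨k, rfl⟩ : ∃ k, h = k + 1 := ⟨h - 1, by omega⟩
  exact revNum_btSys_add_one_le k _ _
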